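/- For every integer n ≥ 1 there exists a deterministic strategy q : List ℝ → {0,1}^n such that for every z ∈ {0,1}^n and every function f : {0,1}^n → ℝ that is monotone with respect to z, the hitting time satisfies τ(q, f, {z}) ≤ n + 1. -/

import Mathlib

/-!
Coordinate ascent decides the bits of `z` one at a time. Starting from the all-`false` point,
step `s` sets bit `s` of the incumbent to `true`: by monotonicity the value goes up exactly when
`z s = true`, so keeping the change precisely on a strict improvement leaves as incumbent the point
that agrees with `z` on the first `s + 1` bits and is `false` elsewhere. The incumbent always has
the largest value seen so far, so an improvement is a strict record of the observed values, and
the strategy can read the bits off the history alone. Every incumbent has been queried, and after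
`n` steps the incumbent is `z`, found within the first `n + 1` queries.
-/

open scoped ENNReal

namespace BBC

variable {S V : Type*}

/-- The history of observed objective values after `t` queries:
`hist q f t = [f x₁, …, f x_t]`, where `x₁ = q []` and
`x_{t+1} = q [f x₁, …, f x_t]`. -/
def hist (q : List V → S) (f : S → V) : ℕ → List V
  | 0 => []
  | t + 1 => hist q f t ++ [f (q (hist q f t))]

/-- `queryPt q f t` is the `(t+1)`-st queried search point `x_{t+1}`. -/
def queryPt (q : List V → S) (f : S → V) (t : ℕ) : S := q (hist q f t)

/-- The hitting time of a deterministic strategy `q` on objective `f` with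
target set `M`: the least `t ≥ 1` with `x_t ∈ M`, valued in `ℕ∞`
(and `⊤` if no query ever hits `M`). -/
noncomputable def hitTime (q : List V → S) (f : S → V) (M : Set S) : ℕ∞ :=
  sInf ((fun k : ℕ => (k : ℕ∞) + 1) '' {k | queryPt q f k ∈ M})

/-- The expected hitting time of a randomized strategy `μ` (a probability mass
function on deterministic strategies) on `(f, M)`, valued in `[0,∞]`. -/
noncomputable def expHitTime (μ : PMF (List V → S)) (f : S → V) (M : Set S) : ℝ≥0∞ :=
  ∑' q, μ q * (hitTime q f M : ℝ≥0∞)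

end BBC

/-- `f` is monotone with respect to `z`. -/
def MonotoneWrt {n : ℕ} (z : Fin n → Bool) (f : (Fin n → Bool) → ℝ) : Prop :=
  ∀ y y' : Fin n → Bool, {i | y i = z i} ⊂ {i | y' i = z i} → f y < f y'

open Function

namespace BBC

variable {S V : Type*}

theorem length_hist (q : List V → S) (f : S → V) (t : ℕ) : (hist q f t).length = t := by
  induction t with
  | zero => rfl
  | succ t ih => simp [hist, ih]

theorem getD_hist (q : List V → S) (f : S → V) {j t : ℕ} (hj : j < t) (d : V) :
    (hist q f t).getD j d = f (queryPt q f j) := by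
  induction t with
  | zero => omega
  | succ t ih =>
    rw [hist]
    rcases (Nat.lt_succ_iff.mp hj).lt_or_eq with hjt | rfl
    · rw [List.getD_append _ _ _ _ (by rwa [length_hist]), ih hjt]
    · rw [List.getD_append_right _ _ _ _ (by rw [length_hist]), length_hist, Nat.sub_self]
      rfl

theorem hitTime_le_of_queryPt_mem {q : List V → S} {f : S → V} {M : Set S} {k : ℕ}
    (hk : queryPt q f k ∈ M) : hitTime q f M ≤ k + 1 :=
  sInf_le ⟨k, hk, rfl⟩

end BBC

namespace MonotoneWrt

variable {n : ℕ} {z : Fin n → Bool} {f : (Fin n → Bool) → ℝ}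

theorem lt_update (hf : MonotoneWrt z f) {c : Fin n → Bool} {j : Fin n} (hcj : c j ≠ z j) :
    f c < f (update c j (z j)) := by
  apply hf
  have hagree : {i | update c j (z j) i = z i} = insert j {i | c i = z i} := by
    ext i
    by_cases hij : i = j
    · subst hij; simp
    · simp [hij]
  rw [hagree]
  exact Set.ssubset_insert hcj

theorem lt_update_true (hf : MonotoneWrt z f) {c : Fin n → Bool} {j : Fin n}
    (hcj : c j = false) (hzj : z j = true) : f c < f (update c j true) := by
  simpa [hzj] using hf.lt_update (c := c) (j := j) (by simp [hcj, hzj])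

theorem update_true_lt (hf : MonotoneWrt z f) {c : Fin n → Bool} {j : Fin n}
    (hcj : c j = false) (hzj : z j = false) : f (update c j true) < f c := by
  have h := hf.lt_update (c := update c j true) (j := j) (by simp [hzj])
  rwa [update_idem, hzj, ← hcj, update_eq_self] at h

end MonotoneWrt

def IsStrictRecord (v : ℕ → ℝ) (i : ℕ) : Prop :=
  ∀ j ≤ i, v j < v (i + 1)

noncomputable instance (v : ℕ → ℝ) : DecidablePred (IsStrictRecord v) := fun i =>
  inferInstanceAs (Decidable (∀ j ≤ i, v j < v (i + 1)))

/-- Before the `(k+1)`-st query the history holds `k` values; bit `i` is set if `i + 1 = k`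
(the bit now being tested) or if `i + 1 < k` and the value after testing it was a strict record. -/
noncomputable def coordinateAscent (n : ℕ) (h : List ℝ) : Fin n → Bool := fun i =>
  if (i : ℕ) + 1 < h.length then decide (IsStrictRecord (h.getD · 0) i)
  else decide ((i : ℕ) + 1 = h.length)

def prefixPoint {n : ℕ} (z : Fin n → Bool) (s : ℕ) : Fin n → Bool := fun i =>
  decide ((i : ℕ) < s) && z i

section CoordinateAscent

variable {n : ℕ} {z : Fin n → Bool} {f : (Fin n → Bool) → ℝ}

theorem queryPt_coordinateAscent_apply (f : (Fin n → Bool) → ℝ) (k : ℕ) (i : Fin n) :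
    BBC.queryPt (coordinateAscent n) f k i =
      if (i : ℕ) + 1 < k then
        decide (IsStrictRecord (fun j => f (BBC.queryPt (coordinateAscent n) f j)) i)
      else decide ((i : ℕ) + 1 = k) := by
  simp only [BBC.queryPt, coordinateAscent, BBC.length_hist]
  split_ifs with hik
  · congr 1
    refine propext (forall₂_congr fun j hj => ?_)
    dsimp only
    rw [BBC.getD_hist _ _ (by omega), BBC.getD_hist _ _ hik]
    rfl
  · rfl

theorem prefixPoint_self (z : Fin n → Bool) (s : Fin n) : prefixPoint z s s = false := by
  simp [prefixPoint]

theorem prefixPoint_succ (z : Fin n → Bool) (s : Fin n) :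
    prefixPoint z ((s : ℕ) + 1) = update (prefixPoint z s) s (z s) := by
  funext i
  by_cases his : i = s
  · subst his; simp [prefixPoint]
  · have : (i : ℕ) ≠ s := fun h => his (Fin.ext h)
    simp only [prefixPoint, update_of_ne his]
    congr 2
    exact propext (by omega)

theorem prefixPoint_succ_of_false {s : Fin n} (hz : z s = false) :
    prefixPoint z ((s : ℕ) + 1) = prefixPoint z s := by
  rw [prefixPoint_succ, hz, ← prefixPoint_self z s, update_eq_self]

theorem prefixPoint_of_le {s : ℕ} (hs : n ≤ s) : prefixPoint z s = z := by
  funext i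
  simp [prefixPoint, i.isLt.trans_le hs]

/-- What holds after the queries with indices `0, …, s`. -/
structure AscentInvariant (f : (Fin n → Bool) → ℝ) (z : Fin n → Bool) (s : ℕ) : Prop where
  isStrictRecord_iff : ∀ i : Fin n, (i : ℕ) < s →
    (IsStrictRecord (fun j => f (BBC.queryPt (coordinateAscent n) f j)) i ↔ z i = true)
  le_incumbent : ∀ j ≤ s, f (BBC.queryPt (coordinateAscent n) f j) ≤ f (prefixPoint z s)
  incumbent_queried : ∃ m ≤ s, BBC.queryPt (coordinateAscent n) f m = prefixPoint z s

theorem ascentInvariant_zero (f : (Fin n → Bool) → ℝ) (z : Fin n → Bool) :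
    AscentInvariant f z 0 := by
  have h0 : BBC.queryPt (coordinateAscent n) f 0 = prefixPoint z 0 := by
    funext i
    simp [queryPt_coordinateAscent_apply, prefixPoint]
  refine ⟨fun i hi => absurd hi (Nat.not_lt_zero i), fun j hj => ?_, ⟨0, le_rfl, h0⟩⟩
  rw [Nat.le_zero.mp hj, h0]

namespace AscentInvariant

variable {s : Fin n}

theorem queryPt_succ (hinv : AscentInvariant f z s) :
    BBC.queryPt (coordinateAscent n) f (s + 1) = update (prefixPoint z s) s true := by
  funext i
  rw [queryPt_coordinateAscent_apply]
  by_cases his : i = s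
  · subst his; simp
  · have : (i : ℕ) ≠ s := fun h => his (Fin.ext h)
    rw [update_of_ne his]
    simp only [prefixPoint, Nat.add_lt_add_iff_right, Nat.add_right_cancel_iff, this,
      decide_false]
    split_ifs with hi
    · simp [hinv.isStrictRecord_iff i hi, hi]
    · simp [hi]

theorem isStrictRecord_iff_succ (hinv : AscentInvariant f z s)
    (hs : IsStrictRecord (fun j => f (BBC.queryPt (coordinateAscent n) f j)) s ↔ z s = true)
    (i : Fin n) (hi : (i : ℕ) < s + 1) :
    IsStrictRecord (fun j => f (BBC.queryPt (coordinateAscent n) f j)) i ↔ z i = true := by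
  rcases (Nat.lt_succ_iff.mp hi).lt_or_eq with his | his
  · exact hinv.isStrictRecord_iff i his
  · rwa [Fin.ext his]

theorem succ_of_true (hf : MonotoneWrt z f) (hinv : AscentInvariant f z s) (hz : z s = true) :
    AscentInvariant f z (s + 1) := by
  have hnext := hinv.queryPt_succ
  have hlt : f (prefixPoint z s) < f (BBC.queryPt (coordinateAscent n) f (s + 1)) := by
    rw [hnext]; exact hf.lt_update_true (prefixPoint_self z s) hz
  have hrecord j (hj : j ≤ (s : ℕ)) :
      f (BBC.queryPt (coordinateAscent n) f j) < f (BBC.queryPt (coordinateAscent n) f (s + 1)) :=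
    (hinv.le_incumbent j hj).trans_lt hlt
  refine ⟨hinv.isStrictRecord_iff_succ (iff_of_true hrecord hz), fun j hj => ?_,
    s + 1, le_rfl, by rw [hnext, prefixPoint_succ z s, hz]⟩
  rw [prefixPoint_succ z s, hz, ← hnext]
  rcases Nat.le_succ_iff.mp hj with hj | rfl
  · exact (hrecord j hj).le
  · exact le_rfl

theorem succ_of_false (hf : MonotoneWrt z f) (hinv : AscentInvariant f z s) (hz : z s = false) :
    AscentInvariant f z (s + 1) := by
  obtain ⟨m, hm, hqm⟩ := hinv.incumbent_queried
  have hlt : f (BBC.queryPt (coordinateAscent n) f (s + 1)) < f (prefixPoint z s) := by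
    rw [hinv.queryPt_succ]; exact hf.update_true_lt (prefixPoint_self z s) hz
  have hnot : ¬IsStrictRecord (fun j => f (BBC.queryPt (coordinateAscent n) f j)) s :=
    fun hrec => (hrec m hm).not_ge (by simpa only [hqm] using hlt.le)
  refine ⟨hinv.isStrictRecord_iff_succ (iff_of_false hnot (by simp [hz])), fun j hj => ?_,
    m, hm.trans s.val.le_succ, by rw [hqm, prefixPoint_succ_of_false hz]⟩
  rw [prefixPoint_succ_of_false hz]
  rcases Nat.le_succ_iff.mp hj with hj | rfl
  · exact hinv.le_incumbent j hj
  · exact hlt.le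

theorem succ (hf : MonotoneWrt z f) (hinv : AscentInvariant f z s) :
    AscentInvariant f z (s + 1) := by
  cases hz : z s
  · exact hinv.succ_of_false hf hz
  · exact hinv.succ_of_true hf hz

end AscentInvariant

theorem ascentInvariant (hf : MonotoneWrt z f) {s : ℕ} (hs : s ≤ n) : AscentInvariant f z s := by
  induction s with
  | zero => exact ascentInvariant_zero f z
  | succ s ih => exact (ih (by omega)).succ (s := ⟨s, by omega⟩) hf

end CoordinateAscent

theorem stmt6_general (n : ℕ) :
    ∃ q : List ℝ → (Fin n → Bool),
      ∀ (z : Fin n → Bool) (f : (Fin n → Bool) → ℝ),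
        MonotoneWrt z f → BBC.hitTime q f {z} ≤ (n : ℕ∞) + 1 := by
  refine ⟨coordinateAscent n, fun z f hf => ?_⟩
  obtain ⟨m, hm, hqm⟩ := (ascentInvariant hf le_rfl).incumbent_queried
  rw [prefixPoint_of_le le_rfl] at hqm
  calc BBC.hitTime (coordinateAscent n) f {z} ≤ m + 1 := BBC.hitTime_le_of_queryPt_mem hqm
    _ ≤ n + 1 := by gcongr

/-- A single deterministic strategy optimizes every function that is monotone
with respect to some `z` within `n+1` queries. -/
theorem stmt6 (n : ℕ) (hn : 1 ≤ n) :
    ∃ q : List ℝ → (Fin n → Bool),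
      ∀ (z : Fin n → Bool) (f : (Fin n → Bool) → ℝ),
        MonotoneWrt z f → BBC.hitTime q f {z} ≤ (n : ℕ∞) + 1 :=
  stmt6_general n
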